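/- Fix n, m ≥ 1. Let T = (S¹)ⁿ be the n-torus, where S¹ is the unit circle in ℂ. The continuous map T^m → C_n(U(m)) which sends an m-tuple (λ_1, …, λ_m) of points λ_i = (λ_i^{(1)},…,λ_i^{(n)}) ∈ T to the commuting n-tuple of diagonal matrices (D_1,…,D_n), where D_j = diag(λ_1^{(j)}, …, λ_m^{(j)}), descends to a homeomorphism from the symmetric product T^m/Σ_m (the quotient of T^m by the symmetric group Σ_m permuting the m coordinates) onto the representation space Rep_n(U(m)) = C_n(U(m))/U(m). -/

import Mathlib

/-- The space `C_n(G)` of commuting `n`-tuples in a topological group `G`, topologized as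
a subspace of `Gⁿ`. -/
def CommTuples (n : ℕ) (G : Type*) [Group G] : Type _ :=
  {g : Fin n → G // ∀ i j, g i * g j = g j * g i}

instance (n : ℕ) (G : Type*) [Group G] [TopologicalSpace G] :
    TopologicalSpace (CommTuples n G) :=
  inferInstanceAs (TopologicalSpace {g : Fin n → G // ∀ i j, g i * g j = g j * g i})

/-- The conjugacy relation on commuting tuples: `y` is the (diagonal) conjugate of `x` by
some `g ∈ G`. -/
def repRel (n : ℕ) (G : Type*) [Group G] (x y : CommTuples n G) : Prop :=
  ∃ g : G, ∀ i, y.1 i = g * x.1 i * g⁻¹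

/-- The representation space `Rep_n(G) = C_n(G)/G`, the quotient of `C_n(G)` by the
conjugation action of `G`, with the quotient topology. -/
def RepSpace (n : ℕ) (G : Type*) [Group G] [TopologicalSpace G] : Type _ :=
  Quot (repRel n G)

instance (n : ℕ) (G : Type*) [Group G] [TopologicalSpace G] :
    TopologicalSpace (RepSpace n G) :=
  inferInstanceAs (TopologicalSpace (Quot (repRel n G)))

/-- A diagonal matrix whose diagonal entries lie on the unit circle is unitary. -/
lemma diagonal_circle_mem_unitaryGroup {m : ℕ} (d : Fin m → Circle) :
    Matrix.diagonal (fun i => (d i : ℂ)) ∈ Matrix.unitaryGroup (Fin m) ℂ := by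
  rw [Matrix.mem_unitaryGroup_iff, Matrix.star_eq_conjTranspose,
    Matrix.diagonal_conjTranspose, Matrix.diagonal_mul_diagonal, ← Matrix.diagonal_one]
  funext i
  simp [Pi.star_apply, Complex.mul_conj]

/-- The commuting `n`-tuple of diagonal unitary matrices `(D₁, …, Dₙ)` attached to an
`m`-tuple `λ = (λ₁, …, λ_m)` of points of the `n`-torus, where
`D_j = diag(λ₁⁽ʲ⁾, …, λ_m⁽ʲ⁾)`. -/
def diagTuple (n m : ℕ) (lam : Fin m → Fin n → Circle) :
    CommTuples n (Matrix.unitaryGroup (Fin m) ℂ) :=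
  ⟨fun j => ⟨Matrix.diagonal (fun i => (lam i j : ℂ)),
      diagonal_circle_mem_unitaryGroup _⟩,
   fun j j' => Subtype.ext (by
      simp only [Submonoid.coe_mul]
      simp [Matrix.diagonal_mul_diagonal, mul_comm])⟩

/-- The relation on `T^m` (with `T = (S¹)ⁿ` the `n`-torus) identifying two `m`-tuples
which differ by a permutation of the `m` coordinates. -/
def symRel (n m : ℕ) (a b : Fin m → Fin n → Circle) : Prop :=
  ∃ σ : Equiv.Perm (Fin m), b = a ∘ σ

/-!
An invertible matrix `g` with `g * diag(a) = diag(b) * g` has, by the Leibniz formula, nonzero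
entries `g (σ k) k` along some permutation `σ`, and each of them forces `a k = b (σ k)`; conversely
permutation matrices realise every reordering of the diagonal. So the induced map
`T^m/Σ_m → Rep_n(U(m))` is well defined and injective. It is surjective because commuting unitaries
are simultaneously unitarily diagonalisable: their real and imaginary parts form a commuting
Hermitian family, to which the spectral theorem applies jointly. Finally the map is closed, since
`T^m` is compact and the `U(m)`-saturation of a compact set of the Hausdorff space `C_n(U(m))`
is compact, being the image of `U(m) × K` under conjugation.
-/

namespace Matrix

variable {n R : Type*} [Fintype n] [DecidableEq n]

theorem exists_perm_forall_apply_ne_zero_of_det_ne_zero [CommRing R] {M : Matrix n n R}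
    (h : M.det ≠ 0) : ∃ σ : Equiv.Perm n, ∀ i, M (σ i) i ≠ 0 := by
  rw [det_apply] at h
  obtain ⟨σ, -, hσ⟩ := Finset.exists_ne_zero_of_sum_ne_zero h
  refine ⟨σ, fun i hi => hσ ?_⟩
  rw [Finset.prod_eq_zero (f := fun j => M (σ j) j) (Finset.mem_univ i) hi, smul_zero]

theorem apply_eq_of_mul_diagonal_eq_diagonal_mul [CommRing R] [NoZeroDivisors R]
    {M : Matrix n n R} {d d' : n → R} (h : M * diagonal d = diagonal d' * M) {i k : n}
    (hM : M i k ≠ 0) : d k = d' i := by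
  have hik := congr_fun (congr_fun h i) k
  rw [mul_diagonal, diagonal_mul, mul_comm] at hik
  exact mul_right_cancel₀ hM hik

theorem permMatrix_mem_unitaryGroup [CommRing R] [StarRing R] (σ : Equiv.Perm n) :
    σ.permMatrix R ∈ unitaryGroup n R := by
  rw [mem_unitaryGroup_iff', star_eq_conjTranspose, conjTranspose_permMatrix, ← permMatrix_mul,
    mul_inv_cancel, permMatrix_one]

theorem permMatrix_mul_diagonal_mul_permMatrix_inv [CommRing R] (σ : Equiv.Perm n)
    (d : n → R) : σ.permMatrix R * diagonal d * (σ⁻¹).permMatrix R = diagonal (d ∘ σ) := by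
  rw [PEquiv.toMatrix_toPEquiv_mul, PEquiv.mul_toMatrix_toPEquiv, submatrix_submatrix,
    ← Equiv.Perm.inv_def, inv_inv, Function.id_comp, Function.comp_id, submatrix_diagonal_equiv]

theorem diagonal_mem_unitaryGroup_iff [CommRing R] [StarRing R] {d : n → R} :
    diagonal d ∈ unitaryGroup n R ↔ ∀ i, d i ∈ unitary R := by
  simp only [mem_unitaryGroup_iff, star_eq_conjTranspose, diagonal_conjTranspose,
    diagonal_mul_diagonal, ← diagonal_one, diagonal_eq_diagonal_iff, Unitary.mem_iff_self_mul_star]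
  rfl

theorem isCompact_unitaryGroup {𝕜 : Type*} [RCLike 𝕜] :
    IsCompact (unitaryGroup n 𝕜 : Set (Matrix n n 𝕜)) :=
  (isCompact_univ_pi fun _ => isCompact_univ_pi fun _ => isCompact_closedBall 0 1)
    |>.of_isClosed_subset (isClosed_unitary (R := Matrix n n 𝕜)) fun U hU i _ j _ => by
      simpa using entry_norm_bound_of_unitary hU i j

instance {𝕜 : Type*} [RCLike 𝕜] : CompactSpace (unitaryGroup n 𝕜) :=
  isCompact_iff_compactSpace.mp isCompact_unitaryGroup

end Matrix

section ComplexStarModule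

open ComplexStarModule

variable {A : Type*} [Ring A] [StarRing A] [Algebra ℂ A] [StarModule ℂ A] {a b : A}

theorem Commute.realPart_left (h : Commute a b) (h' : Commute (star a) b) :
    Commute (ℜ a : A) b := by
  rw [realPart_apply_coe]
  exact (h.add_left h').smul_left _

theorem Commute.imaginaryPart_left (h : Commute a b) (h' : Commute (star a) b) :
    Commute (ℑ a : A) b := by
  rw [imaginaryPart_apply_coe]
  exact ((h.sub_left h').smul_left _).smul_left _

end ComplexStarModule

open Module Function in
theorem LinearMap.IsSymmetric.exists_orthonormalBasis_jointEigenvectors {𝕜 E ι κ : Type*}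
    [RCLike 𝕜] [NormedAddCommGroup E] [InnerProductSpace 𝕜 E] [FiniteDimensional 𝕜 E]
    [Fintype κ] {T : ι → E →ₗ[𝕜] E} (hT : ∀ i, (T i).IsSymmetric)
    (hC : Pairwise (Commute on T)) (hκ : finrank 𝕜 E = Fintype.card κ) :
    ∃ (b : OrthonormalBasis κ 𝕜 E) (χ : κ → ι → 𝕜), ∀ a i, T i (b a) = χ a i • b a := by
  classical
  let W : (ι → 𝕜) → Submodule 𝕜 E := fun χ => ⨅ i, End.eigenspace (T i) (χ i)
  have hW : DirectSum.IsInternal W := directSum_isInternal_of_pairwise_commute hT hC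
  -- only finitely many joint eigenspaces are nonzero; restricting to them gives a finite index
  have := hW.submodule_iSupIndep.fintypeNeBotOfFiniteDimensional
  have hW' := DirectSum.isInternal_ne_bot_iff.mpr hW
  have hOrth := (orthogonalFamily_iInf_eigenspaces hT).comp
    (Subtype.val_injective (p := fun χ => W χ ≠ ⊥))
  let b := (hW'.subordinateOrthonormalBasis hκ hOrth).reindex (Fintype.equivFin κ).symm
  let χ a := (hW'.subordinateOrthonormalBasisIndex hκ (Fintype.equivFin κ a) hOrth).val
  refine ⟨b, χ, fun a i => End.mem_eigenspace_iff.mp ?_⟩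
  have hb : b a ∈ W (χ a) := by
    simpa [b] using hW'.subordinateOrthonormalBasis_subordinate hκ (Fintype.equivFin κ a) hOrth
  exact (Submodule.mem_iInf _).mp hb i

namespace Matrix

variable {n : Type*} [Fintype n] [DecidableEq n]

theorem exists_unitary_conj_diagonal_of_isHermitian_of_commute {𝕜 ι : Type*} [RCLike 𝕜]
    {H : ι → Matrix n n 𝕜} (hH : ∀ i, (H i).IsHermitian) (hC : ∀ i j, Commute (H i) (H j)) :
    ∃ U ∈ unitaryGroup n 𝕜, ∃ d : n → ι → 𝕜,
      ∀ i, H i = U * diagonal (fun a => d a i) * star U := by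
  have hT i : (toEuclideanLin (H i)).IsSymmetric := isSymmetric_toEuclideanLin_iff.mpr (hH i)
  have hTC : Pairwise fun i j => Commute (toEuclideanLin (H i)) (toEuclideanLin (H j)) :=
    fun i j _ => by
      change Commute _ _
      rw [commute_iff_eq, Module.End.mul_eq_comp, Module.End.mul_eq_comp, ← toLpLin_mul_same,
        ← toLpLin_mul_same, (hC i j).eq]
  obtain ⟨b, d, hb⟩ :=
    LinearMap.IsSymmetric.exists_orthonormalBasis_jointEigenvectors hT hTC finrank_euclideanSpace
  let U := (EuclideanSpace.basisFun n 𝕜).toBasis.toMatrix b.toBasis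
  have hU : U ∈ unitaryGroup n 𝕜 :=
    (EuclideanSpace.basisFun n 𝕜).toMatrix_orthonormalBasis_mem_unitary b
  have hU_apply x a : U x a = b a x := rfl
  refine ⟨U, hU, d, fun i => ?_⟩
  have hHU : H i * U = U * diagonal (fun a => d a i) := by
    ext x a
    have hx := congr_arg (fun v => v x) (hb a i)
    simp only [toLpLin_apply, PiLp.toLp_apply, mulVec, dotProduct, PiLp.smul_apply,
      smul_eq_mul] at hx
    rw [mul_diagonal, mul_apply, hU_apply, mul_comm, ← hx]
    simp only [hU_apply]
  calc H i = H i * U * star U := by rw [mul_assoc, mem_unitaryGroup_iff.mp hU, mul_one]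
    _ = U * diagonal (fun a => d a i) * star U := by rw [hHU]

open ComplexStarModule in
theorem exists_unitary_conj_diagonal_of_commute_star {ι : Type*} {A : ι → Matrix n n ℂ}
    (hA : ∀ i j, Commute (A i) (A j)) (hA' : ∀ i j, Commute (A i) (star (A j))) :
    ∃ U ∈ unitaryGroup n ℂ, ∃ μ : n → ι → ℂ,
      ∀ i, A i = U * diagonal (fun a => μ a i) * star U := by
  let H : ι ⊕ ι → Matrix n n ℂ := Sum.elim (fun i => ℜ (A i)) (fun i => ℑ (A i))
  have hH p : (H p).IsHermitian := by
    cases p with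
    | inl i => exact (ℜ (A i)).2
    | inr i => exact (ℑ (A i)).2
  have commute_H p (y : Matrix n n ℂ) (h : Commute (A (p.elim id id)) y)
      (h' : Commute (star (A (p.elim id id))) y) : Commute (H p) y := by
    cases p with
    | inl i => exact h.realPart_left h'
    | inr i => exact h.imaginaryPart_left h'
  have hC p q : Commute (H p) (H q) :=
    commute_H p _ (commute_H q _ (hA _ _) (hA' _ _).symm).symm
      (commute_H q _ (hA' _ _) (hA _ _).star_star).symm
  obtain ⟨U, hU, d, hd⟩ := exists_unitary_conj_diagonal_of_isHermitian_of_commute hH hC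
  refine ⟨U, hU, fun a i => d a (.inl i) + Complex.I * d a (.inr i), fun i => ?_⟩
  calc A i = ℜ (A i) + Complex.I • (ℑ (A i) : Matrix n n ℂ) :=
        (realPart_add_I_smul_imaginaryPart (A i)).symm
    _ = H (.inl i) + Complex.I • H (.inr i) := rfl
    _ = U * diagonal (fun a => d a (.inl i) + Complex.I * d a (.inr i)) * star U := by
      rw [hd, hd, ← Matrix.smul_mul, ← Matrix.mul_smul, ← diagonal_smul, ← add_mul, ← mul_add,
        ← diagonal_add]
      rfl

end Matrix

theorem repRel_equivalence (n : ℕ) (G : Type*) [Group G] : Equivalence (repRel n G) where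
  refl _ := ⟨1, fun _ => by simp⟩
  symm := fun ⟨g, hg⟩ => ⟨g⁻¹, fun i => by rw [hg i]; group⟩
  trans := fun ⟨g, hg⟩ ⟨k, hk⟩ => ⟨k * g, fun i => by rw [hk i, hg i]; group⟩

namespace CommTuples

variable {n : ℕ} {G : Type*} [Group G]

def conj (g : G) (x : CommTuples n G) : CommTuples n G :=
  ⟨fun j => MulAut.conj g (x.1 j), fun i j => by simp only [← map_mul, x.2 i j]⟩

variable [TopologicalSpace G]

instance [T2Space G] : T2Space (CommTuples n G) :=
  inferInstanceAs (T2Space {g : Fin n → G // ∀ i j, g i * g j = g j * g i})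

theorem continuous_conj [IsTopologicalGroup G] :
    Continuous fun p : G × CommTuples n G => conj p.1 p.2 := by
  refine Continuous.subtype_mk (continuous_pi fun j => ?_) _
  have hj : Continuous fun x : CommTuples n G => x.1 j :=
    (continuous_apply j).comp continuous_subtype_val
  exact (continuous_fst.mul (hj.comp continuous_snd)).mul continuous_fst.inv

end CommTuples

theorem RepSpace.isClosed_image_mk {n : ℕ} {G : Type*} [Group G] [TopologicalSpace G]
    [IsTopologicalGroup G] [CompactSpace G] [T2Space G] {K : Set (CommTuples n G)}
    (hK : IsCompact K) : IsClosed (Quot.mk (repRel n G) '' K : Set (RepSpace n G)) := by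
  have hsat : Quot.mk (repRel n G) ⁻¹' (Quot.mk _ '' K) =
      (fun p : G × CommTuples n G => p.2.conj p.1) '' (Set.univ ×ˢ K) := by
    ext y
    simp only [Set.mem_preimage, Set.mem_image, Set.mem_prod, Set.mem_univ, true_and,
      Prod.exists]
    constructor
    · rintro ⟨x, hx, hxy⟩
      obtain ⟨g, hg⟩ := (repRel_equivalence n G).eqvGen_iff.mp (Quot.eqvGen_exact hxy)
      exact ⟨g, x, hx, Subtype.ext (funext fun j => (hg j).symm)⟩
    · rintro ⟨g, x, hx, rfl⟩
      exact ⟨x, hx, Quot.sound ⟨g, fun _ => rfl⟩⟩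
  have hclosed : IsClosed (Quot.mk (repRel n G) ⁻¹' (Quot.mk _ '' K)) := by
    rw [hsat]
    exact ((isCompact_univ.prod hK).image CommTuples.continuous_conj).isClosed
  exact isQuotientMap_quot_mk.isClosed_preimage.mp hclosed

section DiagonalTuples

open Matrix

variable {n m : ℕ}

theorem continuous_diagTuple : Continuous (diagTuple n m) :=
  Continuous.subtype_mk (continuous_pi fun _ =>
    Continuous.subtype_mk (Continuous.matrix_diagonal (by fun_prop)) _) _

theorem repRel_diagTuple_of_symRel {a b : Fin m → Fin n → Circle} (h : symRel n m a b) :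
    repRel n (unitaryGroup (Fin m) ℂ) (diagTuple n m a) (diagTuple n m b) := by
  obtain ⟨σ, rfl⟩ := h
  refine ⟨⟨σ.permMatrix ℂ, permMatrix_mem_unitaryGroup σ⟩, fun j => Subtype.ext ?_⟩
  change diagonal _ = σ.permMatrix ℂ * diagonal _ * star (σ.permMatrix ℂ)
  rw [star_eq_conjTranspose, conjTranspose_permMatrix,
    permMatrix_mul_diagonal_mul_permMatrix_inv]
  rfl

theorem symRel_of_repRel_diagTuple {a b : Fin m → Fin n → Circle}
    (h : repRel n (unitaryGroup (Fin m) ℂ) (diagTuple n m a) (diagTuple n m b)) :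
    symRel n m a b := by
  obtain ⟨g, hg⟩ := h
  have hintertwine j : (g : Matrix (Fin m) (Fin m) ℂ) * diagonal (fun i => (a i j : ℂ)) =
      diagonal (fun i => (b i j : ℂ)) * g :=
    congr_arg Subtype.val (eq_mul_inv_iff_mul_eq.mp (hg j)).symm
  obtain ⟨σ, hσ⟩ :=
    exists_perm_forall_apply_ne_zero_of_det_ne_zero (UnitaryGroup.det_isUnit g).ne_zero
  have hab k : a k = b (σ k) :=
    funext fun j => Circle.ext (apply_eq_of_mul_diagonal_eq_diagonal_mul (hintertwine j) (hσ k))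
  exact ⟨σ⁻¹, funext fun i => by simp [hab]⟩

theorem exists_repRel_diagTuple (x : CommTuples n (unitaryGroup (Fin m) ℂ)) :
    ∃ lam, repRel n (unitaryGroup (Fin m) ℂ) (diagTuple n m lam) x := by
  obtain ⟨U, hU, μ, hμ⟩ := exists_unitary_conj_diagonal_of_commute_star
    (A := fun j => (x.1 j : Matrix (Fin m) (Fin m) ℂ))
    (fun i j => congr_arg Subtype.val (x.2 i j))
    (fun i j => by
      rw [← Unitary.coe_star, Unitary.star_eq_inv]
      exact congr_arg Subtype.val (Commute.inv_right (x.2 i j)).eq)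
  have hdiag j : diagonal (fun a => μ a j) ∈ unitaryGroup (Fin m) ℂ := by
    have := mul_mem (mul_mem (Unitary.star_mem hU) (x.1 j).2) hU
    rwa [hμ j, ← mul_assoc, ← mul_assoc, Unitary.star_mul_self_of_mem hU, one_mul, mul_assoc,
      Unitary.star_mul_self_of_mem hU, mul_one] at this
  exact ⟨fun a j => ⟨μ a j, mem_sphere_zero_iff_norm.mpr
      (CStarRing.norm_of_mem_unitary (diagonal_mem_unitaryGroup_iff.mp (hdiag j) a))⟩,
    ⟨U, hU⟩, fun j => Subtype.ext (hμ j)⟩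

end DiagonalTuples

theorem symmetricProduct_torus_homeomorph_repSpace_unitary_general (n m : ℕ) :
    ∃ h : Quot (symRel n m) ≃ₜ RepSpace n (Matrix.unitaryGroup (Fin m) ℂ),
      ∀ lam : Fin m → Fin n → Circle,
        h (Quot.mk (symRel n m) lam) = Quot.mk (repRel n _) (diagTuple n m lam) := by
  let f : Quot (symRel n m) → RepSpace n (Matrix.unitaryGroup (Fin m) ℂ) :=
    Quot.lift (fun lam => Quot.mk _ (diagTuple n m lam))
      fun _ _ h => Quot.sound (repRel_diagTuple_of_symRel h)
  have hinj : f.Injective := by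
    rintro ⟨a⟩ ⟨b⟩ hab
    exact Quot.sound <| symRel_of_repRel_diagTuple <|
      (repRel_equivalence _ _).eqvGen_iff.mp (Quot.eqvGen_exact hab)
  have hsurj : f.Surjective := by
    rintro ⟨x⟩
    obtain ⟨lam, h⟩ := exists_repRel_diagTuple x
    exact ⟨Quot.mk _ lam, Quot.sound h⟩
  have hcont : Continuous f := continuous_quot_lift _ (continuous_quot_mk.comp continuous_diagTuple)
  have hclosed : IsClosedMap f := by
    intro C hC
    have hK := (hC.preimage continuous_quot_mk).isCompact.image continuous_diagTuple
    rw [← Set.image_preimage_eq C Quot.mk_surjective, Set.image_image]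
    change IsClosed ((Quot.mk _ ∘ diagTuple n m) '' _)
    rw [Set.image_comp]
    exact RepSpace.isClosed_image_mk hK
  exact ⟨(Equiv.ofBijective f ⟨hinj, hsurj⟩).toHomeomorphOfContinuousClosed hcont hclosed,
    fun _ => rfl⟩

/-- The map `T^m → C_n(U(m))` sending `(λ₁, …, λ_m)` to the commuting tuple of diagonal
matrices `(D₁, …, Dₙ)`, `D_j = diag(λ₁⁽ʲ⁾, …, λ_m⁽ʲ⁾)`, descends to a homeomorphism from
the symmetric product `T^m/Σ_m` onto the representation space
`Rep_n(U(m)) = C_n(U(m))/U(m)`. -/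
theorem symmetricProduct_torus_homeomorph_repSpace_unitary (n m : ℕ)
    (hn : 1 ≤ n) (hm : 1 ≤ m) :
    ∃ h : Quot (symRel n m) ≃ₜ RepSpace n (Matrix.unitaryGroup (Fin m) ℂ),
      ∀ lam : Fin m → Fin n → Circle,
        h (Quot.mk (symRel n m) lam) = Quot.mk (repRel n _) (diagTuple n m lam) :=
  symmetricProduct_torus_homeomorph_repSpace_unitary_general n m
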